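/- Let s, i : [0, T] → ℝ solve the fSIR system with s, i > 0 on [0, T], initial data s(0) = s₀, i(0) = i₀. Then for all τ ∈ [0, T]: i(τ) = s₀ + i₀ - s(τ) + (1/R₀)·log(s(τ)/s₀) - ∫₀^τ i(σ)·κ(i(σ))/(1 + κ(i(σ))) dσ. -/

import Mathlib

/-!
Along a trajectory, `i + s - (log s) / R₀` has derivative `-i κ(i) / (1 + κ(i))`: the `s i` terms
of `s' + i'` cancel, and `s' / s = -R₀ i / (1 + κ(i))` turns `-(log s)' / R₀` into `i / (1 + κ(i))`.
Adding the integral of `i κ(i) / (1 + κ(i))` therefore gives a first integral of the fSIR flow,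
whose value at time `0` is `s₀ + i₀ - (log s₀) / R₀`.
-/

open Set

theorem eq_of_hasDerivAt_zero_of_mem_Icc {f : ℝ → ℝ} {a b : ℝ}
    (hf : ∀ x ∈ Icc a b, HasDerivAt f 0 x) : ∀ x ∈ Icc a b, f x = f a :=
  constant_of_has_deriv_right_zero (fun x hx => (hf x hx).continuousAt.continuousWithinAt)
    fun x hx => (hf x (Ico_subset_Icc_self hx)).hasDerivWithinAt

theorem continuous_mul_div_one_add {κ : ℝ → ℝ} (hκc : Continuous κ) (hκnn : ∀ x, 0 ≤ κ x) :
    Continuous fun x => x * κ x / (1 + κ x) :=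
  (continuous_id.mul hκc).div (continuous_const.add hκc) fun x => by linarith [hκnn x]

namespace FSIR

noncomputable def firstIntegral (R₀ : ℝ) (κ s i : ℝ → ℝ) (t : ℝ) : ℝ :=
  i t + s t - 1 / R₀ * Real.log (s t) + ∫ σ in (0:ℝ)..t, i σ * κ (i σ) / (1 + κ (i σ))

theorem vectorField_tangent {R₀ s i k : ℝ} (hR : R₀ ≠ 0) (hs : s ≠ 0) (hk : 1 + k ≠ 0) :
    ((R₀ / (1 + k)) * s - 1) * i + -(R₀ / (1 + k)) * s * i
      - 1 / R₀ * (-(R₀ / (1 + k)) * s * i / s) + i * k / (1 + k) = 0 := by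
  field_simp
  ring

theorem hasDerivAt_firstIntegral {R₀ τ : ℝ} {κ s i : ℝ → ℝ} (hR : R₀ ≠ 0) (hκc : Continuous κ)
    (hκnn : ∀ x, 0 ≤ κ x) (hic : Continuous i)
    (hs : HasDerivAt s (-(R₀ / (1 + κ (i τ))) * s τ * i τ) τ)
    (hi : HasDerivAt i (((R₀ / (1 + κ (i τ))) * s τ - 1) * i τ) τ) (hsτ : s τ ≠ 0) :
    HasDerivAt (firstIntegral R₀ κ s i) 0 τ := by
  have hg := (continuous_mul_div_one_add hκc hκnn).comp hic
  have hint : HasDerivAt (fun t => ∫ σ in (0:ℝ)..t, i σ * κ (i σ) / (1 + κ (i σ)))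
      (i τ * κ (i τ) / (1 + κ (i τ))) τ :=
    intervalIntegral.integral_hasDerivAt_right (hg.intervalIntegrable _ _)
      (hg.stronglyMeasurableAtFilter _ _) hg.continuousAt
  have hsum := ((hi.add hs).sub ((hs.log hsτ).const_mul (1 / R₀))).add hint
  rwa [vectorField_tangent hR hsτ (by linarith [hκnn (i τ)])] at hsum

end FSIR

theorem fsir_phase_space_general (R₀ s₀ i₀ T : ℝ) (κ : ℝ → ℝ) (s i : ℝ → ℝ)
    (hR : 0 < R₀) (hκc : Continuous κ)
    (hκnn : ∀ x, 0 ≤ κ x)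
    (hs : Differentiable ℝ s) (hi : Differentiable ℝ i)
    (hode_s : ∀ τ ∈ Set.Icc (0:ℝ) T,
      deriv s τ = -(R₀ / (1 + κ (i τ))) * s τ * i τ)
    (hode_i : ∀ τ ∈ Set.Icc (0:ℝ) T,
      deriv i τ = ((R₀ / (1 + κ (i τ))) * s τ - 1) * i τ)
    (hspos : ∀ τ ∈ Set.Icc (0:ℝ) T, 0 < s τ)
    (hs0 : s 0 = s₀) (hi0 : i 0 = i₀) :
    ∀ τ ∈ Set.Icc (0:ℝ) T,
      i τ = s₀ + i₀ - s τ + (1 / R₀) * Real.log (s τ / s₀)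
        - ∫ σ in (0:ℝ)..τ, i σ * κ (i σ) / (1 + κ (i σ)) := by
  intro τ hτ
  have hconst := eq_of_hasDerivAt_zero_of_mem_Icc (fun t ht =>
    FSIR.hasDerivAt_firstIntegral hR.ne' hκc hκnn hi.continuous
      (hode_s t ht ▸ (hs t).hasDerivAt) (hode_i t ht ▸ (hi t).hasDerivAt)
      (hspos t ht).ne') τ hτ
  have hs₀ : s₀ ≠ 0 := hs0 ▸ (hspos 0 ⟨le_rfl, hτ.1.trans hτ.2⟩).ne'
  rw [Real.log_div (hspos τ hτ).ne' hs₀]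
  simp only [FSIR.firstIntegral, intervalIntegral.integral_same, hs0, hi0] at hconst
  linarith

theorem fsir_phase_space (R₀ s₀ i₀ T : ℝ) (κ : ℝ → ℝ) (s i : ℝ → ℝ)
    (hR : 0 < R₀) (hT : 0 < T) (hκc : Continuous κ)
    (hκnn : ∀ x, 0 ≤ κ x) (hκmono : Monotone κ) (hκ0 : κ 0 = 0)
    (hs : Differentiable ℝ s) (hi : Differentiable ℝ i)
    (hode_s : ∀ τ ∈ Set.Icc (0:ℝ) T,
      deriv s τ = -(R₀ / (1 + κ (i τ))) * s τ * i τ)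
    (hode_i : ∀ τ ∈ Set.Icc (0:ℝ) T,
      deriv i τ = ((R₀ / (1 + κ (i τ))) * s τ - 1) * i τ)
    (hspos : ∀ τ ∈ Set.Icc (0:ℝ) T, 0 < s τ)
    (hipos : ∀ τ ∈ Set.Icc (0:ℝ) T, 0 < i τ)
    (hs0 : s 0 = s₀) (hi0 : i 0 = i₀) :
    ∀ τ ∈ Set.Icc (0:ℝ) T,
      i τ = s₀ + i₀ - s τ + (1 / R₀) * Real.log (s τ / s₀)
        - ∫ σ in (0:ℝ)..τ, i σ * κ (i σ) / (1 + κ (i σ)) :=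
  fsir_phase_space_general R₀ s₀ i₀ T κ s i hR hκc hκnn hs hi hode_s hode_i hspos hs0 hi0
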